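/- (Correctness of the m-machine DP recurrence, identical machines) Fix m ≥ 2 and let t, d : Fin n → ℕ with d nondecreasing. For 0 ≤ i ≤ n and x : Fin (m−1) → ℕ, let F i x denote: there exists an assignment a of the first i jobs to m machines such that for every μ < m−1 the total processing time assigned to machine μ equals x μ, and for every job j < i, ∑_{k ≤ j, a k = a j} t k ≤ d j. Then for every 1 ≤ i ≤ n and every x: F i x holds if and only if either there exists μ < m−1 with t (i−1) ≤ x μ, x μ ≤ d (i−1), and F (i−1) x', where x' agrees with x except x' μ = x μ − t (i−1); or F (i−1) x holds and (∑_{k < i} t k) − ∑_{μ < m−1} x μ ≤ d (i−1). -/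
import Mathlib

open Finset

/-- `F n m t d i x`: there is an assignment of the first `i` jobs (indices `< i`) to the
`m` machines such that for every machine `μ < m - 1` the total processing time assigned
to machine `μ` is exactly `x μ`, and each of the first `i` jobs (processed in increasing
index order on its machine) finishes by its deadline. -/
def F (n m : ℕ) (t d : Fin n → ℕ) (i : ℕ) (x : Fin (m - 1) → ℕ) : Prop :=
  ∃ a : Fin n → Fin m,
    (∀ μ : Fin (m - 1),
      ∑ k ∈ univ.filter (fun k : Fin n => (k : ℕ) < i ∧ (a k : ℕ) = (μ : ℕ)), t k = x μ) ∧
    ∀ j : Fin n, (j : ℕ) < i →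
      ∑ k ∈ univ.filter (fun k => k ≤ j ∧ a k = a j), t k ≤ d j

section Aux
variable {n : ℕ} (t : Fin n → ℕ) {i : ℕ}

lemma sum_split {M : ℕ} (a : Fin n → Fin (M + 1)) (s : Finset (Fin n)) :
    ∑ k ∈ s, t k =
      (∑ μ : Fin M, ∑ k ∈ s.filter (fun k => a k = Fin.castSucc μ), t k) +
        ∑ k ∈ s.filter (fun k => a k = Fin.last M), t k := by
  rw [← Finset.sum_fiberwise_of_maps_to (fun k _ => Finset.mem_univ (a k)) t,
    Fin.sum_univ_castSucc]

lemma filter_split_pos (hi1 : 1 ≤ i) (hpn : i - 1 < n) (q : Fin n → Prop) [DecidablePred q]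
    (hq : q ⟨i - 1, hpn⟩) :
    univ.filter (fun k : Fin n => (k : ℕ) < i ∧ q k) =
      insert ⟨i - 1, hpn⟩ (univ.filter (fun k : Fin n => (k : ℕ) < i - 1 ∧ q k)) := by
  ext k
  simp only [mem_filter, mem_univ, true_and, mem_insert]
  constructor
  · rintro ⟨hk, hqk⟩
    rcases Nat.lt_or_ge (k : ℕ) (i - 1) with h | h
    · exact Or.inr ⟨h, hqk⟩
    · exact Or.inl (Fin.ext (by simp only [Fin.val_mk]; omega))
  · rintro (hk | ⟨hk, hqk⟩)
    · subst hk; exact ⟨by simp only [Fin.val_mk]; omega, hq⟩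
    · exact ⟨by omega, hqk⟩

lemma filter_split_neg (hi1 : 1 ≤ i) (hpn : i - 1 < n) (q : Fin n → Prop) [DecidablePred q]
    (hq : ¬ q ⟨i - 1, hpn⟩) :
    univ.filter (fun k : Fin n => (k : ℕ) < i ∧ q k) =
      univ.filter (fun k : Fin n => (k : ℕ) < i - 1 ∧ q k) := by
  ext k
  simp only [mem_filter, mem_univ, true_and]
  constructor
  · rintro ⟨hk, hqk⟩
    refine ⟨?_, hqk⟩
    rcases Nat.lt_or_ge (k : ℕ) (i - 1) with h | h
    · exact h
    · exfalso
      apply hq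
      have hk' : k = (⟨i - 1, hpn⟩ : Fin n) := Fin.ext (by simp only [Fin.val_mk]; omega)
      rwa [hk'] at hqk
  · rintro ⟨hk, hqk⟩; exact ⟨by omega, hqk⟩

lemma p_not_mem (hpn : i - 1 < n) (q : Fin n → Prop) [DecidablePred q] :
    (⟨i - 1, hpn⟩ : Fin n) ∉ univ.filter (fun k : Fin n => (k : ℕ) < i - 1 ∧ q k) := by
  simp

lemma filter_update {M : ℕ} (hpn : i - 1 < n) (a : Fin n → Fin (M + 1)) (c : Fin (M + 1))
    (P : Fin (M + 1) → Prop) [DecidablePred P] :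
    univ.filter (fun k : Fin n => (k : ℕ) < i - 1 ∧ P (Function.update a ⟨i - 1, hpn⟩ c k)) =
      univ.filter (fun k : Fin n => (k : ℕ) < i - 1 ∧ P (a k)) := by
  ext k
  simp only [mem_filter, mem_univ, true_and, and_congr_right_iff]
  intro hk
  rw [Function.update_of_ne (by intro h; rw [h] at hk; simp only [Fin.val_mk] at hk; omega)]

lemma update_dl {M : ℕ} (d : Fin n → ℕ) (hpn : i - 1 < n)
    (a : Fin n → Fin (M + 1)) (c : Fin (M + 1))
    (hdl : ∀ j : Fin n, (j : ℕ) < i - 1 →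
      ∑ k ∈ univ.filter (fun k => k ≤ j ∧ a k = a j), t k ≤ d j)
    (j : Fin n) (hj : (j : ℕ) < i - 1) :
    ∑ k ∈ univ.filter (fun k => k ≤ j ∧
        Function.update a ⟨i - 1, hpn⟩ c k = Function.update a ⟨i - 1, hpn⟩ c j), t k ≤ d j := by
  have hne : ∀ k : Fin n, k ≤ j → Function.update a ⟨i - 1, hpn⟩ c k = a k := by
    intro k hk
    apply Function.update_of_ne
    intro h
    rw [h, Fin.le_def] at hk
    simp only [Fin.val_mk] at hk
    omega
  have hss : univ.filter (fun k => k ≤ j ∧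
        Function.update a ⟨i - 1, hpn⟩ c k = Function.update a ⟨i - 1, hpn⟩ c j) =
      univ.filter (fun k => k ≤ j ∧ a k = a j) := by
    ext k
    simp only [mem_filter, mem_univ, true_and]
    constructor
    · rintro ⟨h1, h2⟩
      exact ⟨h1, by rw [← hne k h1, h2, hne j le_rfl]⟩
    · rintro ⟨h1, h2⟩
      exact ⟨h1, by rw [hne k h1, h2, ← hne j le_rfl]⟩
  rw [hss]
  exact hdl j hj

end Aux

theorem aux_rec (n M : ℕ) (t d : Fin n → ℕ)
    (i : ℕ) (hi1 : 1 ≤ i) (hin : i ≤ n) (hpn : i - 1 < n) (x : Fin (M + 1) → ℕ) :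
    F n (M + 2) t d i x ↔
      ((∃ μ : Fin (M + 1), t ⟨i - 1, hpn⟩ ≤ x μ ∧ x μ ≤ d ⟨i - 1, hpn⟩ ∧
          F n (M + 2) t d (i - 1) (Function.update x μ (x μ - t ⟨i - 1, hpn⟩))) ∨
       (F n (M + 2) t d (i - 1) x ∧
          (∑ k ∈ univ.filter (fun k : Fin n => (k : ℕ) < i), t k) - (∑ μ, x μ)
            ≤ d ⟨i - 1, hpn⟩)) := by
  have hkle : ∀ k : Fin n, k ≤ (⟨i - 1, hpn⟩ : Fin n) ↔ (k : ℕ) < i := by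
    intro k; rw [Fin.le_def]; simp only [Fin.val_mk]; omega
  have hcng : ∀ (a : Fin n → Fin (M + 2)) (j : ℕ) (ν : Fin (M + 1)),
      univ.filter (fun k : Fin n => (k : ℕ) < j ∧ a k = Fin.castSucc ν) =
        univ.filter (fun k : Fin n => (k : ℕ) < j ∧ (a k : ℕ) = (ν : ℕ)) := by
    intro a j ν
    ext k
    simp only [mem_filter, mem_univ, true_and, and_congr_right_iff]
    intro _
    constructor
    · intro h; rw [h]; simp
    · intro h; exact Fin.ext (by simpa using h)
  constructor
  · rintro ⟨a, hload, hdl⟩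
    have hcomp := hdl ⟨i - 1, hpn⟩ (by simp only [Fin.val_mk]; omega)
    rcases Fin.eq_castSucc_or_eq_last (a ⟨i - 1, hpn⟩) with ⟨μ, hc⟩ | hc
    · -- last job on a front machine μ
      left
      have hset : univ.filter (fun k => k ≤ (⟨i - 1, hpn⟩ : Fin n) ∧ a k = a ⟨i - 1, hpn⟩)
          = univ.filter (fun k : Fin n => (k : ℕ) < i ∧ (a k : ℕ) = (μ : ℕ)) := by
        ext k
        simp only [mem_filter, mem_univ, true_and, hkle, hc]
        constructor
        · rintro ⟨h1, h2⟩; exact ⟨h1, by rw [h2]; simp⟩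
        · rintro ⟨h1, h2⟩; exact ⟨h1, Fin.ext (by simpa using h2)⟩
      rw [hset, hload μ] at hcomp
      have htp : t ⟨i - 1, hpn⟩ ≤ x μ := by
        rw [← hload μ]
        apply Finset.single_le_sum (fun _ _ => Nat.zero_le _)
        simp only [mem_filter, mem_univ, true_and, Fin.val_mk]
        exact ⟨by omega, by rw [hc]; simp⟩
      refine ⟨μ, htp, hcomp, a, ?_, fun j hj => hdl j (by omega)⟩
      intro ν
      by_cases hν : ν = μ
      · subst hν
        have hq : (a (⟨i - 1, hpn⟩ : Fin n) : ℕ) = (ν : ℕ) := by rw [hc]; simp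
        have hl := hload ν
        rw [filter_split_pos hi1 hpn _ hq, Finset.sum_insert (p_not_mem hpn _)] at hl
        rw [Function.update_self]
        omega
      · have hq : ¬ (a (⟨i - 1, hpn⟩ : Fin n) : ℕ) = (ν : ℕ) := by
          rw [hc]
          simp only [Fin.coe_castSucc]
          exact fun h => hν (Fin.ext h.symm)
        rw [Function.update_of_ne hν, ← hload ν, filter_split_neg hi1 hpn _ hq]
    · -- last job on the last machine
      right
      constructor
      · refine ⟨a, fun ν => ?_, fun j hj => hdl j (by omega)⟩
        have hq : ¬ (a (⟨i - 1, hpn⟩ : Fin n) : ℕ) = (ν : ℕ) := by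
          rw [hc]
          simp only [Fin.val_last]
          have := ν.isLt
          omega
        rw [← hload ν, filter_split_neg hi1 hpn _ hq]
      · have hsp := sum_split t a (univ.filter (fun k : Fin n => (k : ℕ) < i))
        simp only [Finset.filter_filter] at hsp
        have hS : ∑ ν : Fin (M + 1),
            (∑ k ∈ univ.filter (fun k : Fin n => (k : ℕ) < i ∧ a k = Fin.castSucc ν), t k)
              = ∑ ν, x ν :=
          Finset.sum_congr rfl fun ν _ => by rw [hcng a i ν, hload ν]
        have hset2 : univ.filter (fun k => k ≤ (⟨i - 1, hpn⟩ : Fin n) ∧ a k = a ⟨i - 1, hpn⟩)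
            = univ.filter (fun k : Fin n => (k : ℕ) < i ∧ a k = Fin.last (M + 1)) := by
          ext k
          simp only [mem_filter, mem_univ, true_and, hkle, hc]
        rw [hset2] at hcomp
        omega
  · rintro (⟨μ, htp, hxd, a, hload, hdl⟩ | ⟨⟨a, hload, hdl⟩, htot⟩)
    · -- recurrence case 1: schedule job i-1 on machine μ
      refine ⟨Function.update a ⟨i - 1, hpn⟩ (Fin.castSucc μ), fun ν => ?_, fun j hj => ?_⟩
      · by_cases hν : ν = μ
        · subst hν
          have hq : ((Function.update a ⟨i - 1, hpn⟩ (Fin.castSucc ν)) ⟨i - 1, hpn⟩ : ℕ)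
              = (ν : ℕ) := by rw [Function.update_self]; simp
          rw [filter_split_pos hi1 hpn _ hq, Finset.sum_insert (p_not_mem hpn _),
            filter_update hpn a (Fin.castSucc ν) (fun c => (c : ℕ) = (ν : ℕ)),
            hload ν, Function.update_self]
          omega
        · have hq : ¬ ((Function.update a ⟨i - 1, hpn⟩ (Fin.castSucc μ)) ⟨i - 1, hpn⟩ : ℕ)
              = (ν : ℕ) := by
            rw [Function.update_self]
            simp only [Fin.coe_castSucc]
            exact fun h => hν (Fin.ext h.symm)
          rw [filter_split_neg hi1 hpn _ hq,
            filter_update hpn a (Fin.castSucc μ) (fun c => (c : ℕ) = (ν : ℕ)),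
            hload ν, Function.update_of_ne hν]
      · by_cases hjp : (j : ℕ) < i - 1
        · exact update_dl t d hpn a (Fin.castSucc μ) hdl j hjp
        · have hj' : j = ⟨i - 1, hpn⟩ := Fin.ext (by simp only [Fin.val_mk]; omega)
          subst hj'
          have hst : univ.filter (fun k => k ≤ (⟨i - 1, hpn⟩ : Fin n) ∧
                Function.update a ⟨i - 1, hpn⟩ (Fin.castSucc μ) k =
                  Function.update a ⟨i - 1, hpn⟩ (Fin.castSucc μ) ⟨i - 1, hpn⟩) =
              univ.filter (fun k : Fin n => (k : ℕ) < i ∧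
                Function.update a ⟨i - 1, hpn⟩ (Fin.castSucc μ) k = Fin.castSucc μ) := by
            ext k
            simp only [mem_filter, mem_univ, true_and, hkle, Function.update_self]
          rw [hst, filter_split_pos hi1 hpn
              (fun k => Function.update a ⟨i - 1, hpn⟩ (Fin.castSucc μ) k = Fin.castSucc μ)
              (by simp only [Function.update_self]),
            Finset.sum_insert (p_not_mem hpn _),
            filter_update hpn a (Fin.castSucc μ) (fun c => c = Fin.castSucc μ),
            hcng a (i - 1) μ, hload μ, Function.update_self]
          omega
    · -- recurrence case 2: schedule job i-1 on the last machine
      refine ⟨Function.update a ⟨i - 1, hpn⟩ (Fin.last (M + 1)), fun ν => ?_, fun j hj => ?_⟩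
      · have hq : ¬ ((Function.update a ⟨i - 1, hpn⟩ (Fin.last (M + 1))) ⟨i - 1, hpn⟩ : ℕ)
            = (ν : ℕ) := by
          rw [Function.update_self]
          simp only [Fin.val_last]
          have := ν.isLt
          omega
        rw [filter_split_neg hi1 hpn _ hq,
          filter_update hpn a (Fin.last (M + 1)) (fun c => (c : ℕ) = (ν : ℕ)), hload ν]
      · by_cases hjp : (j : ℕ) < i - 1
        · exact update_dl t d hpn a (Fin.last (M + 1)) hdl j hjp
        · have hj' : j = ⟨i - 1, hpn⟩ := Fin.ext (by simp only [Fin.val_mk]; omega)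
          subst hj'
          have hst : univ.filter (fun k => k ≤ (⟨i - 1, hpn⟩ : Fin n) ∧
                Function.update a ⟨i - 1, hpn⟩ (Fin.last (M + 1)) k =
                  Function.update a ⟨i - 1, hpn⟩ (Fin.last (M + 1)) ⟨i - 1, hpn⟩) =
              univ.filter (fun k : Fin n => (k : ℕ) < i ∧
                Function.update a ⟨i - 1, hpn⟩ (Fin.last (M + 1)) k = Fin.last (M + 1)) := by
            ext k
            simp only [mem_filter, mem_univ, true_and, hkle, Function.update_self]
          rw [hst, filter_split_pos hi1 hpn
              (fun k => Function.update a ⟨i - 1, hpn⟩ (Fin.last (M + 1)) k = Fin.last (M + 1))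
              (by simp only [Function.update_self]),
            Finset.sum_insert (p_not_mem hpn _),
            filter_update hpn a (Fin.last (M + 1)) (fun c => c = Fin.last (M + 1))]
          have hsp := sum_split t a (univ.filter (fun k : Fin n => (k : ℕ) < i - 1))
          simp only [Finset.filter_filter] at hsp
          have hS : ∑ ν : Fin (M + 1),
              (∑ k ∈ univ.filter (fun k : Fin n => (k : ℕ) < i - 1 ∧ a k = Fin.castSucc ν), t k)
                = ∑ ν, x ν :=
            Finset.sum_congr rfl fun ν _ => by rw [hcng a (i - 1) ν, hload ν]
          have hts : univ.filter (fun k : Fin n => (k : ℕ) < i) =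
              insert ⟨i - 1, hpn⟩ (univ.filter (fun k : Fin n => (k : ℕ) < i - 1)) := by
            ext k
            simp only [mem_filter, mem_univ, true_and, mem_insert, Fin.ext_iff, Fin.val_mk]
            omega
          rw [hts, Finset.sum_insert (by simp)] at htot
          omega

/-- Correctness of the `m`-machine DP recurrence for identical machines. -/
theorem m_machine_dp_recurrence (n m : ℕ) (hm : 2 ≤ m) (t d : Fin n → ℕ) (hd : Monotone d)
    (i : ℕ) (hi1 : 1 ≤ i) (hin : i ≤ n) (x : Fin (m - 1) → ℕ) :
    F n m t d i x ↔
      ((∃ μ : Fin (m - 1), t ⟨i - 1, by omega⟩ ≤ x μ ∧ x μ ≤ d ⟨i - 1, by omega⟩ ∧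
          F n m t d (i - 1) (Function.update x μ (x μ - t ⟨i - 1, by omega⟩))) ∨
       (F n m t d (i - 1) x ∧
          (∑ k ∈ univ.filter (fun k : Fin n => (k : ℕ) < i), t k) - (∑ μ, x μ)
            ≤ d ⟨i - 1, by omega⟩)) := by
  obtain ⟨M, rfl⟩ : ∃ M, m = M + 2 := ⟨m - 2, by omega⟩
  exact aux_rec n M t d i hi1 hin (by omega) x
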